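/- For each fixed g ∈ P there exists a unique automorphism ψ_g of the I₁-system G_{ι₁} such that ψ_g([e]) = [g]; explicitly, ψ_g([h]) = [h]·[g] for [h] ∈ V₁ and ψ_g(s) = s when the vertex s exists. -/

import Mathlib

universe u

section GoursatSetup

variable {G₁ G₂ : Type u} [Group G₁] [Group G₂]

/-- `π₁(H)`, the projection of `H` to the first factor. -/
def projFst (H : Subgroup (G₁ × G₂)) : Subgroup G₁ := H.map (MonoidHom.fst G₁ G₂)

/-- `π₂(H)`, the projection of `H` to the second factor. -/
def projSnd (H : Subgroup (G₁ × G₂)) : Subgroup G₂ := H.map (MonoidHom.snd G₁ G₂)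

/-- `ι₁⁻¹(H) = {g ∈ G₁ | (g, e) ∈ H}`. -/
def kerFst (H : Subgroup (G₁ × G₂)) : Subgroup G₁ := H.comap (MonoidHom.inl G₁ G₂)

/-- `ι₂⁻¹(H) = {g ∈ G₂ | (e, g) ∈ H}`. -/
def kerSnd (H : Subgroup (G₁ × G₂)) : Subgroup G₂ := H.comap (MonoidHom.inr G₁ G₂)

theorem kerFst_le_projFst (H : Subgroup (G₁ × G₂)) : kerFst H ≤ projFst H :=
  fun g hg => ⟨(g, 1), hg, rfl⟩

theorem kerSnd_le_projSnd (H : Subgroup (G₁ × G₂)) : kerSnd H ≤ projSnd H :=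
  fun g hg => ⟨(1, g), hg, rfl⟩

/-- `ι₁⁻¹(H)` is a normal subgroup of `π₁(H)`. -/
instance kerFst_normal (H : Subgroup (G₁ × G₂)) :
    ((kerFst H).subgroupOf (projFst H)).Normal := by
  constructor
  intro n hn g
  rw [Subgroup.mem_subgroupOf] at hn ⊢
  obtain ⟨x, hxH, hx⟩ := g.2
  have key : x * (((n : G₁), 1) : G₁ × G₂) * x⁻¹ ∈ H :=
    mul_mem (mul_mem hxH hn) (inv_mem hxH)
  have : x * (((n : G₁), 1) : G₁ × G₂) * x⁻¹ = (((g * n * g⁻¹ : projFst H) : G₁), 1) := by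
    ext
    · simp [← hx]
    · simp
  rwa [this] at key

/-- `ι₂⁻¹(H)` is a normal subgroup of `π₂(H)`. -/
instance kerSnd_normal (H : Subgroup (G₁ × G₂)) :
    ((kerSnd H).subgroupOf (projSnd H)).Normal := by
  constructor
  intro n hn g
  rw [Subgroup.mem_subgroupOf] at hn ⊢
  obtain ⟨x, hxH, hx⟩ := g.2
  have key : x * ((1, (n : G₂)) : G₁ × G₂) * x⁻¹ ∈ H :=
    mul_mem (mul_mem hxH hn) (inv_mem hxH)
  have : x * ((1, (n : G₂)) : G₁ × G₂) * x⁻¹ = (1, ((g * n * g⁻¹ : projSnd H) : G₂)) := by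
    ext
    · simp
    · simp [← hx]
  rwa [this] at key

/-- The quotient `V₁ = π₁(H)/ι₁⁻¹(H)`. -/
abbrev QuotFst (H : Subgroup (G₁ × G₂)) := projFst H ⧸ (kerFst H).subgroupOf (projFst H)

/-- The quotient `π₂(H)/ι₂⁻¹(H)`. -/
abbrev QuotSnd (H : Subgroup (G₁ × G₂)) := projSnd H ⧸ (kerSnd H).subgroupOf (projSnd H)

/-- The vertex set of the auxiliary system `G_{ι₁}` : it is `V₁` if `π₁(H) = G₁`
(the extra summand is then empty) and `V₁ ⊔ {s}` otherwise. -/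
abbrev AuxVert (H : Subgroup (G₁ × G₂)) := QuotFst H ⊕ PLift (projFst H ≠ ⊤)

/-- The auxiliary binary relational system `G_{ι₁}` over the label set
`I₁ = I_{ι₁} ⊔ (J₁ \ {0})`. -/
def auxRel (H : Subgroup (G₁ × G₂)) {Iι J₁ : Type u} (j₁0 : J₁) (r : J₁ → G₁) :
    (Iι ⊕ {j : J₁ // j ≠ j₁0}) → AuxVert H → AuxVert H → Prop
  | _,      .inr _, .inr _ => True
  | .inl _, .inl a, .inl b => b = a
  | .inr j, .inl a, .inl b =>
      ∃ h : r j.val ∈ projFst H, b = QuotientGroup.mk ⟨r j.val, h⟩ * a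
  | .inl _, .inl _, .inr _ => False
  | .inl _, .inr _, .inl _ => False
  | .inr j, .inl _, .inr _ => r j.val ∉ projFst H
  | .inr j, .inr _, .inl _ => r j.val ∉ projFst H

/-- The generating family `R = (r_i)_{i ∈ I₁}` of `G₁`. -/
def cayGenFst (H : Subgroup (G₁ × G₂)) {Iι J₁ : Type u} (rι : Iι → kerFst H) (j₁0 : J₁)
    (r : J₁ → G₁) : (Iι ⊕ {j : J₁ // j ≠ j₁0}) → G₁
  | .inl i => (rι i : G₁)
  | .inr j => r j.val

/-- The Cayley diagram `Cay(G₁, R)` as an `I₁`-system. -/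
def cayRelFst (H : Subgroup (G₁ × G₂)) {Iι J₁ : Type u} (rι : Iι → kerFst H) (j₁0 : J₁)
    (r : J₁ → G₁) (i : Iι ⊕ {j : J₁ // j ≠ j₁0}) (g g' : G₁) : Prop :=
  g' = cayGenFst H rι j₁0 r i * g

/-- The map `φ₀ : G₁ → V(G_{ι₁})`, sending `g` to `[g]` if `g ∈ π₁(H)` and to `s`
otherwise. -/
noncomputable def phiZero (H : Subgroup (G₁ × G₂)) (g : G₁) : AuxVert H :=
  letI := Classical.dec (g ∈ projFst H)
  if h : g ∈ projFst H then .inl (QuotientGroup.mk ⟨g, h⟩)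
  else .inr ⟨fun hP => h (by rw [hP]; exact Subgroup.mem_top g)⟩

end GoursatSetup

/-- The automorphism group of a binary relational system `R` over a label set `I`,
as a subgroup of the permutations of the vertex set. -/
def relAut {I V : Type*} (R : I → V → V → Prop) : Subgroup (Equiv.Perm V) where
  carrier := {e | ∀ i v w, R i v w ↔ R i (e v) (e w)}
  one_mem' := by intro i v w; simp
  mul_mem' := by
    intro a b ha hb i v w
    simpa [Equiv.Perm.mul_apply] using (hb i v w).trans (ha i (b v) (b w))
  inv_mem' := by
    intro a ha i v w
    simpa [Equiv.Perm.inv_def] using (ha i (a⁻¹ v) (a⁻¹ w)).symm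

/-!
Right multiplication by `[g]` on `V₁`, fixing `s`, preserves every relation, so it is an
automorphism. Conversely, every class of `V₁` is `[r_j]` for a coset representative `r_j ∈ P`,
and `[r_j]` is joined to `[e]` by the `j`-edge (or equals `[e]` when `j = 0`). An automorphism
sending `[e]` to `[g]` must send the `j`-edge `[e] → [r_j]` to the unique `j`-edge leaving `[g]`,
which ends at `[r_j]·[g]`. Being a bijection that maps `V₁` onto `V₁`, it then fixes `s`.
-/

theorem Equiv.Perm.apply_inr_eq_of_apply_inl {α β : Type*} [Subsingleton β]
    (ψ : Equiv.Perm (α ⊕ β)) {f : α → α} (hf : Function.Surjective f)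
    (hψ : ∀ a, ψ (.inl a) = .inl (f a)) (b : β) : ψ (.inr b) = .inr b := by
  rcases hb : ψ (.inr b) with a | b'
  · obtain ⟨a', rfl⟩ := hf a
    exact absurd (ψ.injective (hb.trans (hψ a').symm)) Sum.inr_ne_inl
  · rw [Subsingleton.elim b' b]

section AuxSystem

variable {G₁ G₂ : Type u} [Group G₁] [Group G₂] {H : Subgroup (G₁ × G₂)}
  {Iι J₁ : Type u} {j₁0 : J₁} {r : J₁ → G₁}

theorem mk_eq_mk_of_mul_inv_mem_kerFst {p q : projFst H}
    (hpq : (p : G₁) * (q : G₁)⁻¹ ∈ kerFst H) :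
    (QuotientGroup.mk p : QuotFst H) = QuotientGroup.mk q := by
  rw [QuotientGroup.eq_iff_div_mem, Subgroup.mem_subgroupOf]
  simpa [div_eq_mul_inv] using hpq

theorem exists_mk_eq_mk_rep (hcos : ∀ g : G₁, ∃ j : J₁, g * (r j)⁻¹ ∈ kerFst H)
    (p : projFst H) :
    ∃ j, ∃ hj : r j ∈ projFst H,
      (QuotientGroup.mk p : QuotFst H) = QuotientGroup.mk ⟨r j, hj⟩ := by
  obtain ⟨j, hj⟩ := hcos p
  have hrj : r j ∈ projFst H := by
    simpa using mul_mem (inv_mem (kerFst_le_projFst H hj)) p.2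
  exact ⟨j, hrj, mk_eq_mk_of_mul_inv_mem_kerFst hj⟩

def auxMulRight (γ : QuotFst H) : Equiv.Perm (AuxVert H) :=
  Equiv.sumCongr (Equiv.mulRight γ) (Equiv.refl _)

@[simp]
theorem auxMulRight_inl (γ a : QuotFst H) : auxMulRight γ (.inl a) = .inl (a * γ) := rfl

@[simp]
theorem auxMulRight_inr (γ : QuotFst H) (u : PLift (projFst H ≠ ⊤)) :
    auxMulRight γ (.inr u) = .inr u := rfl

theorem auxMulRight_mem_relAut (γ : QuotFst H) :
    auxMulRight γ ∈ relAut (auxRel H (Iι := Iι) j₁0 r) := by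
  rintro (i | j) (a | u) (b | v) <;>
    simp only [auxMulRight_inl, auxMulRight_inr, auxRel]
  · exact (mul_left_inj γ).symm
  · refine exists_congr fun hj => ?_
    rw [← mul_assoc, mul_left_inj]

theorem apply_inl_mk_mul_of_mem_relAut {ψ : Equiv.Perm (AuxVert H)}
    (hψ : ψ ∈ relAut (auxRel H (Iι := Iι) j₁0 r)) {j : J₁} (hj0 : j ≠ j₁0)
    (hj : r j ∈ projFst H) {a b : QuotFst H} (hab : ψ (.inl a) = .inl b) :
    ψ (.inl (QuotientGroup.mk ⟨r j, hj⟩ * a)) = .inl (QuotientGroup.mk ⟨r j, hj⟩ * b) := by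
  have hedge : auxRel H (Iι := Iι) j₁0 r (.inr ⟨j, hj0⟩) (.inl a)
      (.inl (QuotientGroup.mk ⟨r j, hj⟩ * a)) := ⟨hj, rfl⟩
  have himage := (hψ _ _ _).mp hedge
  rw [hab] at himage
  cases hc : ψ (.inl (QuotientGroup.mk ⟨r j, hj⟩ * a)) with
  | inl c =>
    rw [hc] at himage
    obtain ⟨-, rfl⟩ := himage
    rfl
  | inr v =>
    rw [hc] at himage
    exact absurd hj himage

theorem apply_inl_of_mem_relAut (hr0 : r j₁0 = 1)
    (hcos : ∀ g : G₁, ∃ j : J₁, g * (r j)⁻¹ ∈ kerFst H) {ψ : Equiv.Perm (AuxVert H)}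
    (hψ : ψ ∈ relAut (auxRel H (Iι := Iι) j₁0 r)) {γ : QuotFst H}
    (hψ1 : ψ (.inl 1) = .inl γ) (h : QuotFst H) : ψ (.inl h) = .inl (h * γ) := by
  induction h using QuotientGroup.induction_on with
  | H p =>
    obtain ⟨j, hj, hp⟩ := exists_mk_eq_mk_rep hcos p
    rw [hp]
    by_cases hj0 : j = j₁0
    · have hrep : (⟨r j, hj⟩ : projFst H) = 1 := Subtype.ext (by simp [hj0, hr0])
      rw [hrep, QuotientGroup.mk_one, one_mul, hψ1]
    · simpa using apply_inl_mk_mul_of_mem_relAut hψ hj0 hj hψ1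

theorem eq_auxMulRight_of_mem_relAut (hr0 : r j₁0 = 1)
    (hcos : ∀ g : G₁, ∃ j : J₁, g * (r j)⁻¹ ∈ kerFst H) {ψ : Equiv.Perm (AuxVert H)}
    (hψ : ψ ∈ relAut (auxRel H (Iι := Iι) j₁0 r)) {γ : QuotFst H}
    (hψ1 : ψ (.inl 1) = .inl γ) : ψ = auxMulRight γ := by
  have hinl := apply_inl_of_mem_relAut hr0 hcos hψ hψ1
  have hinr := ψ.apply_inr_eq_of_apply_inl (mul_right_surjective γ) hinl
  ext (a | u)
  · simp [hinl]
  · simp [hinr]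

end AuxSystem

theorem aux_system_unique_automorphism_general {G₁ G₂ : Type u} [Group G₁] [Group G₂]
    (H : Subgroup (G₁ × G₂)) {Iι J₁ : Type u} (j₁0 : J₁) (r : J₁ → G₁)
    (hr0 : r j₁0 = 1)
    (hcos : ∀ g : G₁, ∃! j : J₁, g * (r j)⁻¹ ∈ kerFst H)
    (g : projFst H) :
    (∃! ψ : relAut (auxRel H (Iι := Iι) j₁0 r),
        (ψ : Equiv.Perm (AuxVert H)) (Sum.inl (1 : QuotFst H))
          = Sum.inl (QuotientGroup.mk g)) ∧
    ∀ ψ : relAut (auxRel H (Iι := Iι) j₁0 r),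
      (ψ : Equiv.Perm (AuxVert H)) (Sum.inl (1 : QuotFst H)) = Sum.inl (QuotientGroup.mk g) →
        (∀ h : QuotFst H,
            (ψ : Equiv.Perm (AuxVert H)) (Sum.inl h) = Sum.inl (h * QuotientGroup.mk g)) ∧
        ∀ u : PLift (projFst H ≠ ⊤),
            (ψ : Equiv.Perm (AuxVert H)) (Sum.inr u) = Sum.inr u := by
  have hrep : ∀ g : G₁, ∃ j : J₁, g * (r j)⁻¹ ∈ kerFst H := fun g => (hcos g).exists
  refine ⟨⟨⟨auxMulRight (QuotientGroup.mk g), auxMulRight_mem_relAut _⟩, by simp, ?_⟩, ?_⟩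
  · intro ψ hψ1
    exact Subtype.ext (eq_auxMulRight_of_mem_relAut hr0 hrep ψ.2 hψ1)
  · intro ψ hψ1
    rw [eq_auxMulRight_of_mem_relAut hr0 hrep ψ.2 hψ1]
    exact ⟨fun _ => rfl, fun _ => rfl⟩

/-- For each `g ∈ π₁(H)` there is a unique automorphism `ψ_g` of the auxiliary
`I₁`-system `G_{ι₁}` with `ψ_g([e]) = [g]`; explicitly `ψ_g([h]) = [h]·[g]` on `V₁`
and `ψ_g(s) = s` when the vertex `s` exists. -/
theorem aux_system_unique_automorphism {G₁ G₂ : Type u} [Group G₁] [Group G₂]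
    (H : Subgroup (G₁ × G₂)) {Iι J₁ : Type u} (rι : Iι → kerFst H) (j₁0 : J₁) (r : J₁ → G₁)
    (hr0 : r j₁0 = 1)
    (hcos : ∀ g : G₁, ∃! j : J₁, g * (r j)⁻¹ ∈ kerFst H)
    (hKgen : Subgroup.closure (Set.range fun i => ((rι i : G₁))) = kerFst H)
    (g : projFst H) :
    (∃! ψ : relAut (auxRel H (Iι := Iι) j₁0 r),
        (ψ : Equiv.Perm (AuxVert H)) (Sum.inl (1 : QuotFst H))
          = Sum.inl (QuotientGroup.mk g)) ∧
    ∀ ψ : relAut (auxRel H (Iι := Iι) j₁0 r),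
      (ψ : Equiv.Perm (AuxVert H)) (Sum.inl (1 : QuotFst H)) = Sum.inl (QuotientGroup.mk g) →
        (∀ h : QuotFst H,
            (ψ : Equiv.Perm (AuxVert H)) (Sum.inl h) = Sum.inl (h * QuotientGroup.mk g)) ∧
        ∀ u : PLift (projFst H ≠ ⊤),
            (ψ : Equiv.Perm (AuxVert H)) (Sum.inr u) = Sum.inr u :=
  aux_system_unique_automorphism_general H j₁0 r hr0 hcos g
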